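/- arXiv:1205.0435 — 5 statements merged into one kernel-verified Lean document; each statement's English description precedes it below -/
import Mathlib

section
/- In the enmeshed-query instance built from a 3-dimensional matching instance (one query per element v ∈ X ∪ Y ∪ Z, with cardinality constraint exactly 3 and selection set equal to the triples of T containing v), a set of queries forms a committable group if and only if it equals {q_x, q_y, q_z} for some triple (x,y,z) ∈ T. -/
/-- In the enmeshed-query instance built from a 3-D matching instance (one query per
element `v`, cardinality exactly 3, selection set the triples containing `v`),
a set `Q` of queries is committable iff `Q = {x, y, z}` for some triple `(x,y,z) ∈ T`. -/
theorem stmt_4 {α : Type*} [DecidableEq α]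
    (X Y Z : Finset α) (hXY : Disjoint X Y) (hXZ : Disjoint X Z) (hYZ : Disjoint Y Z)
    (T : Finset (α × α × α))
    (hT : ∀ t ∈ T, t.1 ∈ X ∧ t.2.1 ∈ Y ∧ t.2.2 ∈ Z)
    (hcov : ∀ v ∈ X ∪ Y ∪ Z, ∃ t ∈ T, v = t.1 ∨ v = t.2.1 ∨ v = t.2.2)
    (Q : Finset α) (hQ : Q ⊆ X ∪ Y ∪ Z) :
    (Q.card = 3 ∧ ∃ t ∈ T, ∀ v ∈ Q, v = t.1 ∨ v = t.2.1 ∨ v = t.2.2)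
      ↔ ∃ t ∈ T, Q = {t.1, t.2.1, t.2.2} := by
  have key : ∀ t ∈ T, t.1 ≠ t.2.1 ∧ t.1 ≠ t.2.2 ∧ t.2.1 ≠ t.2.2 := by
    intro t ht
    obtain ⟨h1, h2, h3⟩ := hT t ht
    refine ⟨?_, ?_, ?_⟩
    · intro h; exact hXY.forall_ne_finset h1 h2 h
    · intro h; exact hXZ.forall_ne_finset h1 h3 h
    · intro h; exact hYZ.forall_ne_finset h2 h3 h
  constructor
  · rintro ⟨hcard, t, ht, hsub⟩
    refine ⟨t, ht, ?_⟩
    obtain ⟨n1, n2, n3⟩ := key t ht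
    have hsub' : Q ⊆ ({t.1, t.2.1, t.2.2} : Finset α) := by
      intro v hv
      rcases hsub v hv with h | h | h <;> simp [h]
    have hc3 : ({t.1, t.2.1, t.2.2} : Finset α).card = 3 := by
      rw [Finset.card_insert_of_notMem (by simp [n1, n2]),
        Finset.card_insert_of_notMem (by simp [n3])]
      rfl
    exact Finset.eq_of_subset_of_card_le hsub' (by rw [hc3, hcard])
  · rintro ⟨t, ht, rfl⟩
    obtain ⟨n1, n2, n3⟩ := key t ht
    refine ⟨?_, t, ht, ?_⟩
    · rw [Finset.card_insert_of_notMem (by simp [n1, n2]),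
        Finset.card_insert_of_notMem (by simp [n3])]
      rfl
    · intro v hv
      simpa using hv
end

section
/- There exists a family of instances on which every best-effort algorithm achieves competitive ratio at least k: for every k ≥ 2 there is a sequence of k² queries, all with cardinality constraint exactly k, such that a best-effort algorithm commits exactly one group (k queries) while the offline optimum commits k disjoint groups (k² queries); hence the competitive ratio of best-effort algorithms is exactly k. -/
/-- A group of queries is committable if its size is exactly `k` and there is a common
point in all its members' selection sets. -/
def Committable {ι β : Type*} (sel : ι → Finset β) (k : ℕ) (G : Finset ι) : Prop :=
  G.card = k ∧ ∃ a : β, ∀ q ∈ G, a ∈ sel q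

/-!
Index the queries by `(i, j) : Fin k × Fin k`: the column `j = 0` is the central group and row
`i` is the `i`-th star. Query `(i, j)` selects `some i`, and the central queries also select the
extra point `none` (the paper's `x`). A committable group needs a common point: `none` is only
shared by central queries, and `some i` only by queries of row `i`. So once the central column is
gone, every group with a common point lies in a single row minus its central query and has fewer
than `k` members.
-/

open Finset

theorem Committable.eq_of_subset {ι β : Type*} {sel : ι → Finset β} {k : ℕ} {S G : Finset ι}
    (hG : Committable sel k G) (hGS : G ⊆ S) (hS : S.card = k) : G = S :=
  eq_of_subset_of_card_le hGS (hS.trans hG.1.symm).le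

namespace StarInstance

variable {α β : Type*} [DecidableEq α] [DecidableEq β]

def starSel (z : β) (p : α × β) : Finset (Option α) :=
  if p.2 = z then {none, some p.1} else {some p.1}

theorem none_mem_starSel {z : β} {p : α × β} : none ∈ starSel z p ↔ p.2 = z := by
  unfold starSel; split_ifs <;> simp [*]

theorem some_mem_starSel {z : β} {p : α × β} {i : α} : some i ∈ starSel z p ↔ p.1 = i := by
  unfold starSel; split_ifs <;> simp [eq_comm]

theorem card_image_mk_left [Fintype β] (i : α) :
    (univ.image (Prod.mk i : β → α × β)).card = Fintype.card β :=
  card_image_of_injective _ (Prod.mk_right_injective i)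

theorem card_image_mk_right [Fintype α] (z : β) :
    (univ.image fun i : α => (i, z)).card = Fintype.card α :=
  card_image_of_injective _ (Prod.mk_left_injective z)

theorem committable_starSel_column [Fintype α] (z : β) :
    Committable (starSel z) (Fintype.card α) (univ.image fun i : α => (i, z)) :=
  ⟨card_image_mk_right z, none, by simp [none_mem_starSel]⟩

theorem committable_starSel_row [Fintype β] (z : β) (i : α) :
    Committable (starSel z) (Fintype.card β) (univ.image (Prod.mk i)) :=
  ⟨card_image_mk_left i, some i, by simp [some_mem_starSel]⟩

theorem pairwise_disjoint_image_mk_left [Fintype β] :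
    (Set.univ : Set α).Pairwise fun i i' =>
      Disjoint (univ.image (Prod.mk i : β → α × β)) (univ.image (Prod.mk i')) := by
  intro i _ i' _ hii'
  simp [disjoint_left, hii'.symm]

theorem biUnion_image_mk_left [Fintype α] [Fintype β] :
    univ.biUnion (fun i : α => univ.image (Prod.mk i : β → α × β)) = univ := by
  ext; simp

theorem not_committable_starSel_of_forall_ne [Fintype β] {z : β} {G : Finset (α × β)}
    (hG : ∀ q ∈ G, q.2 ≠ z) :
    ¬ Committable (starSel z) (Fintype.card β) G := by
  rintro ⟨hcard, a, ha⟩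
  have hβ : 0 < Fintype.card β := Fintype.card_pos_iff.2 ⟨z⟩
  cases a with
  | none =>
    have : G = ∅ := eq_empty_of_forall_notMem fun q hq => hG q hq (none_mem_starSel.1 (ha q hq))
    rw [this, card_empty] at hcard
    omega
  | some i =>
    have hsub : G ⊆ (univ.erase z).image (Prod.mk i) := by
      intro q hq
      have hq1 : q.1 = i := some_mem_starSel.1 (ha q hq)
      simp only [mem_image, mem_erase, mem_univ, and_true]
      exact ⟨q.2, hG q hq, by rw [← hq1]⟩
    have := card_le_card hsub
    rw [card_image_of_injective _ (Prod.mk_right_injective i), card_erase_of_mem (mem_univ z),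
      card_univ] at this
    omega

end StarInstance

open StarInstance in
/-- Hard instance for best-effort algorithms: for every `k ≥ 2` there are `k²` queries
(indexed by `Fin k × Fin k`), all with cardinality constraint exactly `k`, such that
the central group is committable (and is the only committable group among the central
queries, so a best-effort algorithm commits it), after which no committable group
remains; while the offline optimum commits `k` pairwise disjoint star groups covering
all `k²` queries. Hence the competitive ratio of best-effort algorithms is `k`. -/
theorem stmt_6 (k : ℕ) (hk : 2 ≤ k) :
    ∃ sel : Fin k × Fin k → Finset (Option (Fin k)),
      -- the central group {q_1, ..., q_k} is committable
      Committable sel k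
        (Finset.univ.image fun i : Fin k => (i, (⟨0, by omega⟩ : Fin k))) ∧
      -- each of the k star groups is committable
      (∀ i : Fin k, Committable sel k
        (Finset.univ.image fun j : Fin k => (i, j))) ∧
      -- the star groups are pairwise disjoint ...
      ((Set.univ : Set (Fin k)).Pairwise fun i i' =>
        Disjoint (Finset.univ.image fun j : Fin k => ((i, j) : Fin k × Fin k))
                 (Finset.univ.image fun j : Fin k => ((i', j) : Fin k × Fin k))) ∧
      -- ... and cover all k² queries, so the optimum commits all k² queries
      (Finset.univ.biUnion
          (fun i : Fin k => Finset.univ.image fun j : Fin k => ((i, j) : Fin k × Fin k))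
        = Finset.univ) ∧
      -- the only committable subgroup of the central queries is the whole central group
      (∀ G ⊆ Finset.univ.image fun i : Fin k => (i, (⟨0, by omega⟩ : Fin k)),
        Committable sel k G →
          G = Finset.univ.image fun i : Fin k => (i, (⟨0, by omega⟩ : Fin k))) ∧
      -- after the central group is committed, no committable group remains
      (∀ G : Finset (Fin k × Fin k),
        (∀ q ∈ G, q.2 ≠ (⟨0, by omega⟩ : Fin k)) → ¬ Committable sel k G) := by
  set z : Fin k := ⟨0, by omega⟩
  have hcolumn := committable_starSel_column (α := Fin k) z
  have hrow := committable_starSel_row (α := Fin k) z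
  have hrest := fun G : Finset (Fin k × Fin k) =>
    not_committable_starSel_of_forall_ne (G := G) (z := z)
  simp only [Fintype.card_fin] at hcolumn hrow hrest
  exact ⟨starSel z, hcolumn, hrow, pairwise_disjoint_image_mk_left, biUnion_image_mk_left,
    fun G hG hGc => hGc.eq_of_subset hG hcolumn.1, fun G hG => hrest G hG⟩
end

section
/- Let G=(V,E) be a graph and k a natural number. Construct a query q_v for each v ∈ V with 'friend set' N(v) (its neighborhood), such that q_u and q_v match iff {u,v} ∈ E, plus a universal query q that matches every q_v; all cardinality constraints equal k+1. Then there exists a committable group (a set of k+1 pairwise-matching queries containing q) if and only if G contains a clique of size k. -/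
/-- Clique reduction: with one query `q_v` per vertex (where `q_u` and `q_v` match iff
`{u,v} ∈ E`) plus a universal query `q = none` matching every `q_v`, all cardinality
constraints equal to `k+1`, there is a committable group (a set of `k+1` pairwise
matching queries containing `q`) iff `G` contains a clique of size `k`. -/
theorem stmt_8 {V : Type*} [DecidableEq V] (G : SimpleGraph V) (k : ℕ) :
    (∃ S : Finset (Option V), none ∈ S ∧ S.card = k + 1 ∧
        ∀ a ∈ S, ∀ b ∈ S, a ≠ b →
          ∀ u : V, a = some u → ∀ v : V, b = some v → G.Adj u v)
      ↔ ∃ C : Finset V, G.IsNClique k C := by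
  constructor
  · rintro ⟨S, hn, hc, hadj⟩
    refine ⟨S.preimage some (Set.injOn_of_injective (Option.some_injective V)), ?_, ?_⟩
    · intro u hu v hv huv
      simp only [Finset.mem_coe, Finset.mem_preimage] at hu hv
      exact hadj _ hu _ hv (by simpa using huv) u rfl v rfl
    · have himg : (S.preimage some (Set.injOn_of_injective (Option.some_injective V))).image some
          = S.erase none := by
        ext a
        simp only [Finset.mem_image, Finset.mem_preimage, Finset.mem_erase]
        constructor
        · rintro ⟨v, hv, rfl⟩; exact ⟨by simp, hv⟩
        · rintro ⟨ha, haS⟩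
          cases a with
          | none => simp at ha
          | some v => exact ⟨v, haS, rfl⟩
      have := congrArg Finset.card himg
      rw [Finset.card_image_of_injective _ (Option.some_injective V),
        Finset.card_erase_of_mem hn, hc] at this
      simpa using this
  · rintro ⟨C, hclique, hcard⟩
    refine ⟨insert none (C.image some), by simp, ?_, ?_⟩
    · rw [Finset.card_insert_of_notMem (by simp),
        Finset.card_image_of_injective _ (Option.some_injective V), hcard]
    · intro a ha b hb hab u hu v hv
      subst hu hv
      simp only [Finset.mem_insert, Finset.mem_image] at ha hb
      rcases ha with h | ⟨u', hu', h⟩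
      · exact absurd h (by simp)
      rcases hb with h' | ⟨v', hv', h'⟩
      · exact absurd h' (by simp)
      obtain rfl : u' = u := by simpa using h
      obtain rfl : v' = v := by simpa using h'
      exact hclique (Finset.mem_coe.mpr hu') (Finset.mem_coe.mpr hv') (by simpa using hab)
end

section
/- Correctness of the cardinality-segment search: let S be a finite set of queries, each q ∈ S having an interval cardinality constraint [lb_q, ub_q] ⊆ ℕ. If there exists a subset T ⊆ S with lb_q ≤ |T| ≤ ub_q for all q ∈ T, then there exists an integer c that is a lower-bound endpoint lb_q of some q ∈ S (or the global minimum candidate) such that the set S_c = {q ∈ S : lb_q ≤ c ≤ ub_q} satisfies |S_c| ≥ c, and any c-element subset of S_c is a valid committable group with respect to cardinality constraints. -/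
/-- Correctness of the cardinality-segment search: if some nonempty `T ⊆ S` satisfies
all its members' cardinality intervals, then there is a candidate size `c` that is the
lower endpoint `lb q` of some `q ∈ S` such that `S_c = {q ∈ S : lb q ≤ c ≤ ub q}` has
at least `c` elements, and every `c`-element subset of `S_c` satisfies all its members'
cardinality constraints. -/
theorem stmt_10 {ι : Type*} [DecidableEq ι] (S : Finset ι) (lb ub : ι → ℕ)
    (hlb : ∀ q ∈ S, 2 ≤ lb q)
    (h : ∃ T ⊆ S, T.Nonempty ∧ ∀ q ∈ T, lb q ≤ T.card ∧ T.card ≤ ub q) :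
    ∃ c : ℕ, (∃ q ∈ S, c = lb q) ∧
      c ≤ (S.filter fun q => lb q ≤ c ∧ c ≤ ub q).card ∧
      ∀ T' ⊆ S.filter (fun q => lb q ≤ c ∧ c ≤ ub q), T'.card = c →
        ∀ q ∈ T', lb q ≤ T'.card ∧ T'.card ≤ ub q := by
  obtain ⟨T, hTS, hTne, hT⟩ := h
  obtain ⟨q₀, hq₀T, hq₀max⟩ := T.exists_max_image lb hTne
  refine ⟨lb q₀, ⟨q₀, hTS hq₀T, rfl⟩, ?_, ?_⟩
  · calc lb q₀ ≤ T.card := (hT q₀ hq₀T).1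
      _ ≤ (S.filter fun q => lb q ≤ lb q₀ ∧ lb q₀ ≤ ub q).card := by
        apply Finset.card_le_card
        intro q hq
        simp only [Finset.mem_filter]
        exact ⟨hTS hq, hq₀max q hq, le_trans (hT q₀ hq₀T).1 (hT q hq).2⟩
  · intro T' hT' hcard q hq
    have := hT' hq
    simp only [Finset.mem_filter] at this
    rw [hcard]
    exact this.2
end

section
/- Monotone feasibility check: let S be a finite set of queries with interval cardinality constraints, and for an integer m define S_m = {q ∈ S : lb_q ≤ m ≤ ub_q}. Then there exists a subset T ⊆ S satisfying all its members' cardinality constraints if and only if there exists m with m ≤ |S_m|, in which case any m-element subset of S_m works. -/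
/-! A feasible `T` lies in `S_m` for `m = |T|`, so `m ≤ |S_m|`; conversely every `m`-element
subset of `S_m` has cardinality `m`, which lies in each of its members' intervals. -/

namespace Finset

variable {ι : Type*} (lb ub : ι → ℕ)

theorem subset_filter_card_of_forall_mem_Icc {S T : Finset ι} (hTS : T ⊆ S)
    (hT : ∀ q ∈ T, lb q ≤ #T ∧ #T ≤ ub q) :
    T ⊆ S.filter fun q => lb q ≤ #T ∧ #T ≤ ub q :=
  fun q hq => mem_filter.mpr ⟨hTS hq, hT q hq⟩

theorem forall_mem_Icc_card_of_subset_filter {S T : Finset ι} {m : ℕ}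
    (hT : T ⊆ S.filter fun q => lb q ≤ m ∧ m ≤ ub q) (hcard : #T = m) :
    ∀ q ∈ T, lb q ≤ #T ∧ #T ≤ ub q :=
  fun _ hq => hcard ▸ (mem_filter.mp (hT hq)).2

end Finset

theorem stmt_11_general {ι : Type*} (S : Finset ι) (lb ub : ι → ℕ) :
    (∃ T ⊆ S, T.Nonempty ∧ ∀ q ∈ T, lb q ≤ T.card ∧ T.card ≤ ub q)
      ↔ ∃ m : ℕ, 1 ≤ m ∧ m ≤ (S.filter fun q => lb q ≤ m ∧ m ≤ ub q).card ∧
          ∀ T' ⊆ S.filter (fun q => lb q ≤ m ∧ m ≤ ub q), T'.card = m →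
            ∀ q ∈ T', lb q ≤ T'.card ∧ T'.card ≤ ub q := by
  constructor
  · rintro ⟨T, hTS, hne, hT⟩
    exact ⟨T.card, hne.card_pos,
      Finset.card_le_card (Finset.subset_filter_card_of_forall_mem_Icc lb ub hTS hT),
      fun _ hT' hcard => Finset.forall_mem_Icc_card_of_subset_filter lb ub hT' hcard⟩
  · rintro ⟨m, hm, hmS, hfeas⟩
    obtain ⟨T, hTSm, hTcard⟩ := Finset.exists_subset_card_eq hmS
    exact ⟨T, hTSm.trans (Finset.filter_subset _ _), Finset.card_pos.mp (hTcard ▸ hm),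
      hfeas T hTSm hTcard⟩

/-- Monotone feasibility check: some nonempty subset `T ⊆ S` satisfies all its members'
cardinality intervals iff there exists `m ≥ 1` with `m ≤ |S_m|` where
`S_m = {q ∈ S : lb q ≤ m ≤ ub q}`, in which case any `m`-element subset of `S_m`
satisfies all its members' cardinality constraints. -/
theorem stmt_11 {ι : Type*} (S : Finset ι) (lb ub : ι → ℕ)
    (hlb : ∀ q ∈ S, 2 ≤ lb q) :
    (∃ T ⊆ S, T.Nonempty ∧ ∀ q ∈ T, lb q ≤ T.card ∧ T.card ≤ ub q)
      ↔ ∃ m : ℕ, 1 ≤ m ∧ m ≤ (S.filter fun q => lb q ≤ m ∧ m ≤ ub q).card ∧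
          ∀ T' ⊆ S.filter (fun q => lb q ≤ m ∧ m ≤ ub q), T'.card = m →
            ∀ q ∈ T', lb q ≤ T'.card ∧ T'.card ≤ ub q :=
  stmt_11_general S lb ub
end
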